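/- Let M be an oriented closed connected manifold with fundamental group Γ, let (X,μ) and (Y,ν) be standard Γ-spaces, and t ∈ [0,1]. Let Z = X ⊔ Y with the probability measure t·μ ⊔ (1−t)·ν and the obvious Γ-action. Then ⎸M⎹^Z = t·⎸M⎹^X + (1−t)·⎸M⎹^Y. -/

import Mathlib

open scoped BigOperators
open Finsupp

noncomputable section

namespace SimplexCategory

/-- The topological simplex, as defined in the older Mathlib (since removed there). -/
def toTopObj (x : SimplexCategory) : Set (Fin (x.len + 1) → NNReal) := { f | ∑ i, f i = 1 }

/-- The induced map on topological simplices, as defined in the older Mathlib. -/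
def toTopMap {x y : SimplexCategory} (f : x ⟶ y) (g : x.toTopObj) : y.toTopObj :=
  ⟨fun i => ∑ j ∈ Finset.univ.filter (fun k => f.toOrderHom k = i),
    (g : Fin (x.len + 1) → NNReal) j, by
    simp only [toTopObj, Set.mem_ofPred_eq]
    rw [← Finset.sum_biUnion]
    · have hg : ∑ i, (g : Fin (x.len + 1) → NNReal) i = 1 := g.2
      convert hg
      simp [Finset.eq_univ_iff_forall]
    · apply Set.pairwiseDisjoint_filter⟩

theorem continuous_toTopMap {x y : SimplexCategory} (f : x ⟶ y) : Continuous (toTopMap f) := by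
  refine Continuous.subtype_mk (continuous_pi fun i => ?_) _
  exact continuous_finsetSum _ (fun j _ => (continuous_apply _).comp continuous_subtype_val)

end SimplexCategory

/-- The topological standard `n`-simplex. -/
abbrev TSimplex (n : ℕ) : Type :=
  (SimplexCategory.toTopObj (SimplexCategory.mk n))

/-- Singular `n`-simplices of a space `X`. -/
abbrev SSimplex (n : ℕ) (X : Type) [TopologicalSpace X] : Type := C(TSimplex n, X)

/-- Singular `n`-chains of `X` with coefficients in an abelian group `A`,
with its `ℓ¹`-flavoured finitely supported model. -/
abbrev SChains (n : ℕ) (X : Type) [TopologicalSpace X] (A : Type) [AddCommGroup A] : Type :=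
  SSimplex n X →₀ A

/-- The `i`-th face inclusion of topological simplices. -/
def face (n : ℕ) (i : Fin (n + 2)) : C(TSimplex n, TSimplex (n + 1)) :=
  ⟨fun t => SimplexCategory.toTopMap (SimplexCategory.δ i) t,
    SimplexCategory.continuous_toTopMap _⟩

/-- The singular boundary operator from degree `n+1` to degree `n`. -/
def bdryMap (n : ℕ) (X : Type) [TopologicalSpace X] (A : Type) [AddCommGroup A] :
    SChains (n + 1) X A →ₗ[ℤ] SChains n X A :=
  Finsupp.lsum ℤ fun σ =>
    ∑ i : Fin (n + 2), ((-1 : ℤ) ^ (i : ℕ)) •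
      (Finsupp.lsingle (σ.comp (face n i)) : A →ₗ[ℤ] SChains n X A)

/-- The boundary operator out of degree `n` (the zero map in degree `0`). -/
def bdryFrom (n : ℕ) (X : Type) [TopologicalSpace X] (A : Type) [AddCommGroup A] :
    SChains n X A →ₗ[ℤ] SChains (n - 1) X A :=
  match n with
  | 0 => 0
  | (m + 1) => bdryMap m X A

/-- Singular `n`-cycles. -/
def cyclesSub (n : ℕ) (X : Type) [TopologicalSpace X] (A : Type) [AddCommGroup A] :
    Submodule ℤ (SChains n X A) :=
  LinearMap.ker (bdryFrom n X A)

/-- Singular `n`-boundaries. -/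
def bdriesSub (n : ℕ) (X : Type) [TopologicalSpace X] (A : Type) [AddCommGroup A] :
    Submodule ℤ (SChains n X A) :=
  LinearMap.range (bdryMap n X A)

/-- The `ℓ¹`-norm of an integral singular chain. -/
def l1Z {n : ℕ} {X : Type} [TopologicalSpace X] (c : SChains n X ℤ) : ℝ :=
  c.sum fun _ a => |(a : ℝ)|

/-- The `ℓ¹`-norm of a real singular chain. -/
def l1R {n : ℕ} {X : Type} [TopologicalSpace X] (c : SChains n X ℝ) : ℝ :=
  c.sum fun _ a => |a|

/-- Change of coefficients `ℤ → ℝ` on singular chains. -/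
def castChain {n : ℕ} {X : Type} [TopologicalSpace X] (c : SChains n X ℤ) : SChains n X ℝ :=
  Finsupp.mapRange (fun a : ℤ => (a : ℝ)) Int.cast_zero c

/-- `z` is an integral fundamental cycle of `X` in degree `n`:  it is a cycle whose homology
class freely generates `H_n(X;ℤ)` (which for an oriented closed connected `n`-manifold
characterises the fundamental class up to sign). -/
def IsFundCycle (n : ℕ) (X : Type) [TopologicalSpace X] (z : SChains n X ℤ) : Prop :=
  z ∈ cyclesSub n X ℤ ∧
  (∀ w ∈ cyclesSub n X ℤ, ∃ k : ℤ, w - k • z ∈ bdriesSub n X ℤ) ∧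
  (∀ k : ℤ, k • z ∈ bdriesSub n X ℤ → k = 0)

/-- The `ℓ¹`-semi-norm (over `ℤ`) of the homology class of the cycle `z`. -/
def clNormZ (n : ℕ) (X : Type) [TopologicalSpace X] (z : SChains n X ℤ) : ℝ :=
  sInf {r : ℝ | ∃ c, c ∈ cyclesSub n X ℤ ∧ c - z ∈ bdriesSub n X ℤ ∧ r = l1Z c}

/-- The `ℓ¹`-semi-norm of the image in real homology of the class of the integral cycle `z`;
for a fundamental cycle `z` of `M` this is the simplicial volume `‖M‖`. -/
def realSV (n : ℕ) (X : Type) [TopologicalSpace X] (z : SChains n X ℤ) : ℝ :=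
  sInf {r : ℝ | ∃ c, c ∈ cyclesSub n X ℝ ∧ castChain z - c ∈ bdriesSub n X ℝ ∧ r = l1R c}

/-- The integral simplicial volume `‖X‖_ℤ`. -/
def intSV (n : ℕ) (X : Type) [TopologicalSpace X] : ℝ :=
  sInf {r : ℝ | ∃ z, IsFundCycle n X z ∧ r = clNormZ n X z}

/-- `N` is an oriented closed connected topological `n`-manifold (orientability is recorded
through the existence of fundamental cycles in the statements below). -/
def IsClosedConnectedManifold (n : ℕ) (N : Type) [TopologicalSpace N] : Prop :=
  CompactSpace N ∧ ConnectedSpace N ∧ T2Space N ∧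
    Nonempty (ChartedSpace (EuclideanSpace ℝ (Fin n)) N)

/-- The data contributing value `r` to the stable integral simplicial volume of `M`:
a `d`-sheeted covering `p : N → M` by an oriented closed connected `n`-manifold `N`
together with a fundamental cycle of `N`, with `r = ‖N‖_ℤ / d`. -/
def IsCoverDatum (n : ℕ) (M : Type) [TopologicalSpace M] (N : Type) [TopologicalSpace N]
    (p : N → M) (d : ℕ) (r : ℝ) : Prop :=
  IsClosedConnectedManifold n N ∧ 0 < d ∧ IsCoveringMap p ∧
    (∀ x : M, Nat.card (p ⁻¹' {x}) = d) ∧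
    ∃ z, IsFundCycle n N z ∧ r = clNormZ n N z / d

/-- The stable integral simplicial volume `‖M‖_ℤ^∞`. -/
def stisv (n : ℕ) (M : Type) [TopologicalSpace M] : ℝ :=
  sInf {r : ℝ | ∃ (N : Type) (tN : TopologicalSpace N) (p : N → M) (d : ℕ),
    @IsCoverDatum n M _ N tN p d r}

end

open MeasureTheory

noncomputable section

/-- A standard `Γ`-space structure on `X`: a probability measure on the standard Borel
space `X` together with a measurable measure-preserving (left) `Γ`-action. -/
structure StdStr (Γ : Type) [Group Γ] (X : Type) [MeasurableSpace X] where
  μ : Measure X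
  borel : StandardBorelSpace X
  prob : IsProbabilityMeasure μ
  act : Γ → X → X
  meas : ∀ g, MeasurePreserving (act g) μ μ
  act_one : ∀ x, act 1 x = x
  act_mul : ∀ g h x, act (g * h) x = act g (act h x)

variable {Γ : Type} [Group Γ] {X : Type} [MeasurableSpace X]

/-- The coefficient module `L^∞(X,μ;ℤ)` (for `b = true`) respectively `L^∞(X,μ;ℝ)`
(for `b = false`), realised as essentially bounded (and, if `b = true`, a.e.
integer-valued) elements of the space of a.e.-equivalence classes of measurable
real-valued functions. -/
def LinfG (S : StdStr Γ X) (b : Bool) : AddSubgroup (X →ₘ[S.μ] ℝ) where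
  carrier := {f | (∃ C : ℝ, ∀ᵐ x ∂S.μ, |f x| ≤ C) ∧
    (b → ∀ᵐ x ∂S.μ, ∃ k : ℤ, f x = (k : ℝ))}
  add_mem' := by
    rintro f g ⟨⟨C, hC⟩, hf⟩ ⟨⟨D, hD⟩, hg⟩
    constructor
    · refine ⟨C + D, ?_⟩
      filter_upwards [hC, hD, AEEqFun.coeFn_add f g] with x h1 h2 h3
      rw [h3]
      exact (abs_add_le _ _).trans (add_le_add h1 h2)
    · intro hb
      filter_upwards [hf hb, hg hb, AEEqFun.coeFn_add f g] with x ⟨k, hk⟩ ⟨l, hl⟩ h3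
      exact ⟨k + l, by rw [h3]; simp [Pi.add_apply, hk, hl]⟩
  zero_mem' := by
    constructor
    · refine ⟨0, ?_⟩
      filter_upwards [AEEqFun.coeFn_zero (μ := S.μ) (β := ℝ)] with x h
      simp [h]
    · intro _
      filter_upwards [AEEqFun.coeFn_zero (μ := S.μ) (β := ℝ)] with x h
      exact ⟨0, by simp [h]⟩
  neg_mem' := by
    rintro f ⟨⟨C, hC⟩, hf⟩
    constructor
    · refine ⟨C, ?_⟩
      filter_upwards [hC, AEEqFun.coeFn_neg f] with x h1 h2
      rw [h2]; simpa using h1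
    · intro hb
      filter_upwards [hf hb, AEEqFun.coeFn_neg f] with x ⟨k, hk⟩ h2
      exact ⟨-k, by rw [h2]; simp [hk]⟩

/-- The right `Γ`-action on `L^∞`: `(f · g)(x) = f(g • x)`. -/
def rhoG (S : StdStr Γ X) (b : Bool) (g : Γ) (f : (LinfG S b)) : (LinfG S b) :=
  ⟨AEEqFun.compMeasurePreserving (f : X →ₘ[S.μ] ℝ) (S.act g) (S.meas g), by
    obtain ⟨⟨C, hC⟩, hf⟩ := f.2
    constructor
    · refine ⟨C, ?_⟩
      have := (S.meas g).quasiMeasurePreserving.ae hC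
      filter_upwards [AEEqFun.coeFn_compMeasurePreserving
        (f : X →ₘ[S.μ] ℝ) (S.meas g), this] with x h1 h2
      rw [h1]; exact h2
    · intro hb
      have := (S.meas g).quasiMeasurePreserving.ae (hf hb)
      filter_upwards [AEEqFun.coeFn_compMeasurePreserving
        (f : X →ₘ[S.μ] ℝ) (S.meas g), this] with x h1 h2
      rw [h1]; exact h2⟩

/-- The constant function with (integer) value `k` in the coefficient module. -/
def constLG (S : StdStr Γ X) (b : Bool) (k : ℤ) : (LinfG S b) :=
  ⟨k • (AEEqFun.const X (1 : ℝ) : X →ₘ[S.μ] ℝ), by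
    constructor
    · refine ⟨|(k : ℝ)|, ?_⟩
      have h1 : ((k • (AEEqFun.const X (1 : ℝ) : X →ₘ[S.μ] ℝ)) : X →ₘ[S.μ] ℝ)
          =ᵐ[S.μ] fun _ => (k : ℝ) := by
        filter_upwards [AEEqFun.coeFn_smul (k : ℤ) (AEEqFun.const X (1 : ℝ) : X →ₘ[S.μ] ℝ),
          AEEqFun.coeFn_const X (1 : ℝ)] with x h2 h3
        simp [h2, h3]
      filter_upwards [h1] with x h
      rw [h]
    · intro _
      have h1 : ((k • (AEEqFun.const X (1 : ℝ) : X →ₘ[S.μ] ℝ)) : X →ₘ[S.μ] ℝ)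
          =ᵐ[S.μ] fun _ => (k : ℝ) := by
        filter_upwards [AEEqFun.coeFn_smul (k : ℤ) (AEEqFun.const X (1 : ℝ) : X →ₘ[S.μ] ℝ),
          AEEqFun.coeFn_const X (1 : ℝ)] with x h2 h3
        simp [h2, h3]
      filter_upwards [h1] with x h
      exact ⟨k, h⟩⟩

theorem constLG_zero (S : StdStr Γ X) (b : Bool) : constLG S b 0 = 0 :=
  Subtype.ext (zero_smul ℤ _)

variable {Mt : Type} [TopologicalSpace Mt]

/-- Change of coefficients from `ℤ` to `L^∞` (constant functions) on chains of the
universal covering; this realises `C_*(M̃;ℤ) → L^∞ ⊗ C_*(M̃;ℤ)` at the chain level. -/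
def iotaChain (S : StdStr Γ X) (b : Bool) {n : ℕ} (c : SChains n Mt ℤ) :
    SChains n Mt (LinfG S b) :=
  Finsupp.mapRange (constLG S b) (constLG_zero S b) c

/-- The submodule of relations defining the twisted coefficients
`L^∞(X;ℤ) ⊗_{ℤΓ} C_n(M̃;ℤ)`:  it is spanned by the elements
`(g·σ) ⊗ f - σ ⊗ (f·g)`. -/
def relSub (n : ℕ) (actM : Γ → C(Mt, Mt)) (S : StdStr Γ X) (b : Bool) :
    Submodule ℤ (SChains n Mt (LinfG S b)) :=
  Submodule.span ℤ {c | ∃ (g : Γ) (σ : SSimplex n Mt) (f : (LinfG S b)),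
    c = Finsupp.single ((actM g).comp σ) f - Finsupp.single σ (rhoG S b g f)}

/-- The parametrised `ℓ¹`-norm `Σ_σ ∫_X |f_σ| dμ` of a twisted chain. -/
def normP (S : StdStr Γ X) (b : Bool) {n : ℕ} (c : SChains n Mt (LinfG S b)) : ℝ :=
  c.sum fun _ f => ∫ x, |(f : X →ₘ[S.μ] ℝ) x| ∂S.μ

/-- Pushforward of chains along the covering projection. -/
def pushf {M : Type} [TopologicalSpace M] (π : C(Mt, M)) {n : ℕ}
    (c : SChains n Mt ℤ) : SChains n M ℤ :=
  Finsupp.mapDomain (fun σ => π.comp σ) c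

/-- `c` is an `X`-parametrised fundamental cycle for the fundamental cycle `z` of `M`:
working in the model `L^∞ ⊗_{ℤΓ} C_*(M̃;ℤ) = C_*(M̃;L^∞)/rel`, the chain `c` is a cycle
of the quotient complex and represents the image of the class of `z` under the change of
coefficients given by the constant inclusion `ℤ ↪ L^∞`. -/
def IsPFC (n : ℕ) (Γ : Type) [Group Γ] (Mt M : Type) [TopologicalSpace Mt]
    [TopologicalSpace M] (π : C(Mt, M)) (actM : Γ → C(Mt, Mt))
    (X : Type) [MeasurableSpace X] (S : StdStr Γ X) (b : Bool)
    (z : SChains n M ℤ) (c : SChains n Mt (LinfG S b)) : Prop :=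
  bdryFrom n Mt (LinfG S b) c ∈ relSub (n - 1) actM S b ∧
  ∃ zt : SChains n Mt ℤ, pushf π zt = z ∧
    c - iotaChain S b zt ∈ relSub n actM S b ⊔ bdriesSub n Mt (LinfG S b)

/-- The `X`-parametrised simplicial volume `⎸M⎹^X` (with integral coefficients for
`b = true`, with real coefficients for `b = false`). -/
def pSV (b : Bool) (n : ℕ) (Γ : Type) [Group Γ] (Mt M : Type) [TopologicalSpace Mt]
    [TopologicalSpace M] (π : C(Mt, M)) (actM : Γ → C(Mt, Mt))
    (X : Type) [MeasurableSpace X] (S : StdStr Γ X) (z : SChains n M ℤ) : ℝ :=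
  sInf {r : ℝ | ∃ c, IsPFC n Γ Mt M π actM X S b z c ∧ r = normP S b c}

/-- The integral foliated simplicial volume `⎸M⎹`: the infimum of the `X`-parametrised
simplicial volumes over all standard `Γ`-spaces `X`. -/
def ifsv (n : ℕ) (Γ : Type) [Group Γ] (Mt M : Type) [TopologicalSpace Mt]
    [TopologicalSpace M] (π : C(Mt, M)) (actM : Γ → C(Mt, Mt))
    (z : SChains n M ℤ) : ℝ :=
  sInf {r : ℝ | ∃ (X : Type) (mX : MeasurableSpace X) (S : @StdStr Γ _ X mX),
    r = @pSV true n Γ _ Mt M _ _ π actM X mX S z}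

/-- `π : M̃ → M` is a universal covering with deck transformation action `actM` of `Γ`
(so that `Γ` is identified with the fundamental group of `M`). -/
structure UnivCover (Γ : Type) [Group Γ] (Mt M : Type) [TopologicalSpace Mt]
    [TopologicalSpace M] (π : C(Mt, M)) (actM : Γ → C(Mt, Mt)) : Prop where
  covering : IsCoveringMap π
  simplyConnected : SimplyConnectedSpace Mt
  deck_proj : ∀ g x, π (actM g x) = π x
  deck_trans : ∀ x y, π x = π y → ∃ g, actM g x = y
  deck_free : ∀ g x, actM g x = x → g = 1
  act_one : ∀ x, actM 1 x = x
  act_mul : ∀ g h x, actM (g * h) x = actM g (actM h x)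

end

/-!
Restriction to the two summands identifies `L^∞(X ⊔ Y; ℤ)` with `L^∞(X; ℤ) × L^∞(Y; ℤ)` as
`ℤΓ`-modules, compatibly with the constant functions, and the integral over `X ⊔ Y` is
`t ∫_X + (1 - t) ∫_Y`. So a parametrised fundamental cycle over `X ⊔ Y` restricts to
parametrised fundamental cycles over `X` and `Y` (over a summand of positive weight), with norm
`t |c_X| + (1 - t) |c_Y|`; conversely two such cycles glue to one over `X ⊔ Y` of that norm. For
the gluing, the two lifts of `z` to `M̃` underlying the cycles may differ, but only by deck
transformations, which act trivially on the twisted chains with constant coefficients.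
-/

section ChangeOfCoefficients

variable {W : Type} [TopologicalSpace W] {A B : Type} [AddCommGroup A] [AddCommGroup B] {n : ℕ}

noncomputable abbrev changeCoeff (φ : A →ₗ[ℤ] B) : SChains n W A →ₗ[ℤ] SChains n W B :=
  Finsupp.mapRange.linearMap φ

@[simp]
theorem changeCoeff_single (φ : A →ₗ[ℤ] B) (σ : SSimplex n W) (a : A) :
    changeCoeff φ (single σ a) = single σ (φ a) :=
  mapRange_single (hf := φ.map_zero)

theorem bdryMap_single (σ : SSimplex (n + 1) W) (a : A) :
    bdryMap n W A (single σ a)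
      = ∑ i : Fin (n + 2), ((-1 : ℤ) ^ (i : ℕ)) • single (σ.comp (face n i)) a := by
  simp [bdryMap]

theorem changeCoeff_bdryMap (φ : A →ₗ[ℤ] B) (c : SChains (n + 1) W A) :
    bdryMap n W B (changeCoeff φ c) = changeCoeff φ (bdryMap n W A c) := by
  induction c using Finsupp.induction_linear with
  | zero => simp
  | add c d hc hd => simp only [map_add, hc, hd]
  | single σ a => simp [bdryMap_single, map_sum]

theorem changeCoeff_bdryFrom (φ : A →ₗ[ℤ] B) (c : SChains n W A) :
    bdryFrom n W B (changeCoeff φ c) = changeCoeff φ (bdryFrom n W A c) := by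
  cases n with
  | zero => simp [bdryFrom]
  | succ m => exact changeCoeff_bdryMap φ c

theorem bdriesSub_le_comap_changeCoeff (φ : A →ₗ[ℤ] B) :
    bdriesSub n W A ≤ (bdriesSub n W B).comap (changeCoeff φ) := by
  rintro _ ⟨d, rfl⟩
  exact ⟨changeCoeff φ d, changeCoeff_bdryMap φ d⟩

end ChangeOfCoefficients

section Pushforward

variable {Mt M : Type} [TopologicalSpace Mt] [TopologicalSpace M] {π : C(Mt, M)} {n : ℕ}

theorem pushf_single (σ : SSimplex n Mt) (a : ℤ) : pushf π (single σ a) = single (π.comp σ) a :=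
  mapDomain_single

theorem pushf_bdryMap (c : SChains (n + 1) Mt ℤ) :
    pushf π (bdryMap n Mt ℤ c) = bdryMap n M ℤ (pushf π c) := by
  induction c using Finsupp.induction_linear with
  | zero => simp [pushf]
  | add c d hc hd => simp only [map_add, pushf, mapDomain_add] at *; rw [hc, hd]
  | single σ a =>
    rw [pushf_single, bdryMap_single, bdryMap_single, pushf, mapDomain_finsetSum]
    refine Finset.sum_congr rfl fun i _ => ?_
    rw [mapDomain_smul, mapDomain_single, ContinuousMap.comp_assoc]

theorem pushf_bdryFrom (c : SChains n Mt ℤ) :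
    pushf π (bdryFrom n Mt ℤ c) = bdryFrom n M ℤ (pushf π c) := by
  cases n with
  | zero => simp [bdryFrom, pushf]
  | succ m => exact pushf_bdryMap c

end Pushforward

theorem Finsupp.mem_span_single_sub_single_of_mapDomain_eq_zero {α β R M : Type*} [Ring R]
    [AddCommGroup M] [Module R M] {p : α → β} {w : α →₀ M} (hw : mapDomain p w = 0) :
    w ∈ Submodule.span R {c | ∃ a a' m, p a = p a' ∧ c = single a m - single a' m} := by
  classical
  rcases isEmpty_or_nonempty α with _ | _
  · simp [Subsingleton.elim w 0]
  -- `s` picks one representative of each fibre of `p`; `w` and `mapDomain s w` differ by generators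
  set s : α → α := Function.invFun p ∘ p
  have hs : mapDomain s w = 0 := by rw [mapDomain_comp, hw, mapDomain_zero]
  have hw' : w = w.sum fun a m => single a m - single (s a) m := by
    rw [Finsupp.sum_sub, sum_single, ← mapDomain, hs, sub_zero]
  rw [hw']
  refine Submodule.finsuppSum_mem _ _ _ _ fun a _ => Submodule.subset_span ?_
  exact ⟨a, s a, w a, (Function.invFun_eq ⟨a, rfl⟩).symm, rfl⟩

instance (n : ℕ) : PreconnectedSpace (TSimplex n) := by
  refine Subtype.preconnectedSpace ?_
  have himage : SimplexCategory.toTopObj (SimplexCategory.mk n)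
      = (fun f i => (f i).toNNReal) '' stdSimplex ℝ (Fin (n + 1)) := by
    ext f
    refine ⟨fun hf => ⟨fun i => f i, ⟨fun i => (f i).2, ?_⟩, by simp⟩, ?_⟩
    · change ∑ i, (f i : ℝ) = 1
      exact_mod_cast (hf : ∑ i, f i = 1)
    · rintro ⟨g, ⟨hg0, hg1⟩, rfl⟩
      change ∑ i, (g i).toNNReal = 1
      rw [← Real.toNNReal_sum_of_nonneg fun i _ => hg0 i, hg1, Real.toNNReal_one]
  rw [himage]
  exact (convex_stdSimplex ℝ _).isPreconnected.image _ (by fun_prop)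

instance (n : ℕ) : Nonempty (TSimplex n) :=
  ⟨⟨Pi.single 0 1, by simp [SimplexCategory.toTopObj]⟩⟩

section SumMeasure

variable {X Y : Type} [MeasurableSpace X] [MeasurableSpace Y]

theorem MeasurableEmbedding.inl : MeasurableEmbedding (Sum.inl : X → X ⊕ Y) :=
  ⟨Sum.inl_injective, measurable_inl, fun _ hs => hs.inl_image⟩

theorem MeasurableEmbedding.inr : MeasurableEmbedding (Sum.inr : Y → X ⊕ Y) :=
  ⟨Sum.inr_injective, measurable_inr, fun _ hs => hs.inr_image⟩

instance Sum.borelSpace [TopologicalSpace X] [TopologicalSpace Y] [BorelSpace X] [BorelSpace Y] :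
    BorelSpace (X ⊕ Y) := by
  refine ⟨le_antisymm (fun s hs => ?_) ?_⟩
  · let := borel (X ⊕ Y)
    have : BorelSpace (X ⊕ Y) := ⟨rfl⟩
    rw [← Set.image_preimage_inl_union_image_preimage_inr s]
    exact (Topology.IsOpenEmbedding.inl.measurableEmbedding.measurableSet_image' hs.1).union
      (Topology.IsOpenEmbedding.inr.measurableEmbedding.measurableSet_image' hs.2)
  · refine MeasurableSpace.generateFrom_le fun s hs => measurableSet_sum_iff.2 ?_
    exact ⟨(hs.preimage continuous_inl).measurableSet, (hs.preimage continuous_inr).measurableSet⟩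

instance Sum.standardBorelSpace [StandardBorelSpace X] [StandardBorelSpace Y] :
    StandardBorelSpace (X ⊕ Y) :=
  letI := upgradeStandardBorel X
  letI := upgradeStandardBorel Y
  inferInstance

noncomputable def convexSumMeasure (μ : Measure X) (ν : Measure Y) (t : ℝ) : Measure (X ⊕ Y) :=
  ENNReal.ofReal t • μ.map Sum.inl + ENNReal.ofReal (1 - t) • ν.map Sum.inr

variable {μ : Measure X} {ν : Measure Y} {t : ℝ}

theorem ae_convexSumMeasure_of {p : X ⊕ Y → Prop} (hX : ∀ᵐ x ∂μ, p (Sum.inl x))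
    (hY : ∀ᵐ y ∂ν, p (Sum.inr y)) : ∀ᵐ z ∂convexSumMeasure μ ν t, p z :=
  ae_add_measure_iff.2 ⟨Measure.ae_smul_measure (MeasurableEmbedding.inl.ae_map_iff.2 hX) _,
    Measure.ae_smul_measure (MeasurableEmbedding.inr.ae_map_iff.2 hY) _⟩

theorem quasiMeasurePreserving_inl_convexSumMeasure (ht : 0 < t) :
    Measure.QuasiMeasurePreserving Sum.inl μ (convexSumMeasure μ ν t) :=
  ⟨measurable_inl, (Measure.absolutelyContinuous_smul (by simpa using ht)).trans
    (Measure.le_add_right le_rfl).absolutelyContinuous⟩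

theorem quasiMeasurePreserving_inr_convexSumMeasure (ht : t < 1) :
    Measure.QuasiMeasurePreserving Sum.inr ν (convexSumMeasure μ ν t) :=
  ⟨measurable_inr, (Measure.absolutelyContinuous_smul (by simpa using ht)).trans
    (Measure.le_add_left le_rfl).absolutelyContinuous⟩

theorem integral_convexSumMeasure (ht : t ∈ Set.Icc (0 : ℝ) 1) {f : X ⊕ Y → ℝ}
    (hf : Integrable f (convexSumMeasure μ ν t)) :
    ∫ z, f z ∂convexSumMeasure μ ν t
      = t * ∫ x, f (Sum.inl x) ∂μ + (1 - t) * ∫ y, f (Sum.inr y) ∂ν := by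
  obtain ⟨hfX, hfY⟩ := integrable_add_measure.1 hf
  rw [convexSumMeasure, integral_add_measure hfX hfY, integral_smul_measure,
    integral_smul_measure, MeasurableEmbedding.inl.integral_map,
    MeasurableEmbedding.inr.integral_map, ENNReal.toReal_ofReal ht.1,
    ENNReal.toReal_ofReal (sub_nonneg.2 ht.2), smul_eq_mul, smul_eq_mul]

theorem isProbabilityMeasure_convexSumMeasure [IsProbabilityMeasure μ] [IsProbabilityMeasure ν]
    (ht : t ∈ Set.Icc (0 : ℝ) 1) : IsProbabilityMeasure (convexSumMeasure μ ν t) := by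
  constructor
  rw [convexSumMeasure, Measure.add_apply, Measure.smul_apply, Measure.smul_apply,
    MeasurableEmbedding.inl.map_apply, MeasurableEmbedding.inr.map_apply]
  simp only [Set.preimage_univ, measure_univ, smul_eq_mul, mul_one]
  rw [← ENNReal.ofReal_add ht.1 (sub_nonneg.2 ht.2)]
  simp

theorem measurePreserving_sumMap_convexSumMeasure {f : X → X} {g : Y → Y}
    (hf : MeasurePreserving f μ μ) (hg : MeasurePreserving g ν ν) :
    MeasurePreserving (Sum.map f g) (convexSumMeasure μ ν t) (convexSumMeasure μ ν t) := by
  have hfg := hf.measurable.sumMap hg.measurable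
  refine ⟨hfg, ?_⟩
  rw [convexSumMeasure, Measure.map_add _ _ hfg, Measure.map_smul, Measure.map_smul,
    Measure.map_map hfg measurable_inl, Measure.map_map hfg measurable_inr,
    show Sum.map f g ∘ Sum.inl = Sum.inl ∘ f from rfl,
    show Sum.map f g ∘ Sum.inr = Sum.inr ∘ g from rfl,
    ← Measure.map_map measurable_inl hf.measurable, ← Measure.map_map measurable_inr hg.measurable,
    hf.map_eq, hg.map_eq]

end SumMeasure

noncomputable def StdStr.convexSum {Γ : Type} [Group Γ] {X Y : Type} [MeasurableSpace X]
    [MeasurableSpace Y] (S : StdStr Γ X) (T : StdStr Γ Y) (t : ℝ) (ht : t ∈ Set.Icc (0 : ℝ) 1) :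
    StdStr Γ (X ⊕ Y) where
  μ := convexSumMeasure S.μ T.μ t
  borel := by have := S.borel; have := T.borel; infer_instance
  prob := by have := S.prob; have := T.prob; exact isProbabilityMeasure_convexSumMeasure ht
  act g := Sum.map (S.act g) (T.act g)
  meas g := measurePreserving_sumMap_convexSumMeasure (S.meas g) (T.meas g)
  act_one x := by cases x <;> simp [S.act_one, T.act_one]
  act_mul g h x := by cases x <;> simp [S.act_mul, T.act_mul]

section ConvexSum

variable {Γ : Type} [Group Γ] {X Y : Type} [MeasurableSpace X] [MeasurableSpace Y]
  {S : StdStr Γ X} {T : StdStr Γ Y} {U : StdStr Γ (X ⊕ Y)} {t : ℝ}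

theorem ae_of_ae_inl_of_ae_inr (hμ : U.μ = convexSumMeasure S.μ T.μ t) {p : X ⊕ Y → Prop}
    (hX : ∀ᵐ x ∂S.μ, p (Sum.inl x)) (hY : ∀ᵐ y ∂T.μ, p (Sum.inr y)) : ∀ᵐ z ∂U.μ, p z :=
  hμ ▸ ae_convexSumMeasure_of hX hY

theorem sumElim_ae_eq_sumElim (hμ : U.μ = convexSumMeasure S.μ T.μ t) {f f' : X → ℝ}
    {g g' : Y → ℝ} (hf : f =ᵐ[S.μ] f') (hg : g =ᵐ[T.μ] g') :
    Sum.elim f g =ᵐ[U.μ] Sum.elim f' g' :=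
  ae_of_ae_inl_of_ae_inr hμ hf hg

end ConvexSum

theorem MeasureTheory.AEEqFun.compQuasiMeasurePreserving_add {α β γ : Type*} [MeasurableSpace α]
    [MeasurableSpace β] {μ : Measure α} {ν : Measure β} [TopologicalSpace γ] [Add γ]
    [ContinuousAdd γ] (f g : β →ₘ[ν] γ) {φ : α → β} (hφ : Measure.QuasiMeasurePreserving φ μ ν) :
    (f + g).compQuasiMeasurePreserving φ hφ
      = f.compQuasiMeasurePreserving φ hφ + g.compQuasiMeasurePreserving φ hφ := by
  ext
  filter_upwards [AEEqFun.coeFn_compQuasiMeasurePreserving (f + g) hφ,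
    AEEqFun.coeFn_add (f.compQuasiMeasurePreserving φ hφ) (g.compQuasiMeasurePreserving φ hφ),
    AEEqFun.coeFn_compQuasiMeasurePreserving f hφ, AEEqFun.coeFn_compQuasiMeasurePreserving g hφ,
    hφ.ae (AEEqFun.coeFn_add f g)] with x h1 h2 h3 h4 h5
  simp only [h1, h2, Pi.add_apply, h3, h4, Function.comp_apply, h5]

namespace LinfG

variable {Γ : Type} [Group Γ] {X X' Y : Type} [MeasurableSpace X] [MeasurableSpace X']
  [MeasurableSpace Y] {S : StdStr Γ X} {S' : StdStr Γ X'} {T : StdStr Γ Y}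
  {U : StdStr Γ (X ⊕ Y)} {b : Bool} {t : ℝ}

theorem mem_iff {F : X →ₘ[S.μ] ℝ} :
    F ∈ LinfG S b ↔ ∃ C : ℝ, ∀ᵐ x ∂S.μ, |F x| ≤ C ∧ (b → ∃ k : ℤ, F x = k) := by
  refine ⟨fun ⟨⟨C, hC⟩, hF⟩ => ⟨C, ?_⟩, fun ⟨C, hC⟩ => ⟨⟨C, hC.mono fun _ h => h.1⟩, ?_⟩⟩
  · cases b
    · exact hC.mono fun _ h => ⟨h, nofun⟩
    · filter_upwards [hC, hF rfl] with x h1 h2 using ⟨h1, fun _ => h2⟩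
  · intro hb
    exact hC.mono fun _ h => h.2 hb

theorem integrable_abs (f : LinfG S b) : Integrable (fun x => |(f : X →ₘ[S.μ] ℝ) x|) S.μ := by
  have := S.prob
  obtain ⟨C, hC⟩ := f.2.1
  exact .of_bound (f : X →ₘ[S.μ] ℝ).aestronglyMeasurable.norm C (by simpa using hC)

theorem integral_abs_zero : ∫ x, |((0 : LinfG S b) : X →ₘ[S.μ] ℝ) x| ∂S.μ = 0 :=
  integral_eq_zero_of_ae <| (AEEqFun.coeFn_zero (μ := S.μ) (β := ℝ)).mono fun _ h => by simp [h]

theorem coeFn_constLG (k : ℤ) :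
    ((constLG S b k : LinfG S b) : X →ₘ[S.μ] ℝ) =ᵐ[S.μ] fun _ => (k : ℝ) := by
  filter_upwards [AEEqFun.coeFn_smul k (AEEqFun.const X (1 : ℝ) : X →ₘ[S.μ] ℝ),
    AEEqFun.coeFn_const X (1 : ℝ)] with x h1 h2
  simp [constLG, h1, h2]

variable (S S' b) in
noncomputable def comap (φ : X → X') (hφ : Measure.QuasiMeasurePreserving φ S.μ S'.μ) :
    LinfG S' b →ₗ[ℤ] LinfG S b :=
  AddMonoidHom.toIntLinearMap
    { toFun f := ⟨(f : X' →ₘ[S'.μ] ℝ).compQuasiMeasurePreserving φ hφ, by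
        obtain ⟨C, hC⟩ := mem_iff.1 f.2
        refine mem_iff.2 ⟨C, ?_⟩
        filter_upwards [hφ.ae hC,
          AEEqFun.coeFn_compQuasiMeasurePreserving (f : X' →ₘ[S'.μ] ℝ) hφ] with x h e
        rwa [e]⟩
      map_zero' := rfl
      map_add' f g :=
        Subtype.ext (AEEqFun.compQuasiMeasurePreserving_add _ _ hφ) }

section Comap

variable {φ : X → X'} {hφ : Measure.QuasiMeasurePreserving φ S.μ S'.μ}

theorem coeFn_comap (f : LinfG S' b) :
    ((comap S S' b φ hφ f : LinfG S b) : X →ₘ[S.μ] ℝ) =ᵐ[S.μ] (f : X' →ₘ[S'.μ] ℝ) ∘ φ :=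
  AEEqFun.coeFn_compQuasiMeasurePreserving _ hφ

theorem rhoG_eq_comap (g : Γ) :
    rhoG S b g = comap S S b (S.act g) (S.meas g).quasiMeasurePreserving :=
  rfl

theorem comap_rhoG (hequiv : ∀ g x, φ (S.act g x) = S'.act g (φ x)) (g : Γ) (f : LinfG S' b) :
    comap S S' b φ hφ (rhoG S' b g f) = rhoG S b g (comap S S' b φ hφ f) := by
  refine Subtype.ext ?_
  change ((f : X' →ₘ[S'.μ] ℝ).compQuasiMeasurePreserving (S'.act g)
      (S'.meas g).quasiMeasurePreserving).compQuasiMeasurePreserving φ hφ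
    = ((f : X' →ₘ[S'.μ] ℝ).compQuasiMeasurePreserving φ hφ).compQuasiMeasurePreserving (S.act g)
      (S.meas g).quasiMeasurePreserving
  rw [← AEEqFun.compQuasiMeasurePreserving_comp, ← AEEqFun.compQuasiMeasurePreserving_comp]
  congr 1
  exact funext fun x => (hequiv g x).symm

theorem comap_constLG (k : ℤ) : comap S S' b φ hφ (constLG S' b k) = constLG S b k := by
  refine Subtype.ext (AEEqFun.ext ?_)
  filter_upwards [coeFn_comap (hφ := hφ) (constLG S' b k), hφ.ae (coeFn_constLG (S := S') k),
    coeFn_constLG k] with x h1 h2 h3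
  rw [h1, h3]
  exact h2

theorem integral_abs_comap (f : LinfG S' b) :
    ∫ x, |((comap S S' b φ hφ f : LinfG S b) : X →ₘ[S.μ] ℝ) x| ∂S.μ
      = ∫ x, |(f : X' →ₘ[S'.μ] ℝ) (φ x)| ∂S.μ :=
  integral_congr_ae <| (coeFn_comap (hφ := hφ) f).mono fun _ h => congrArg abs h

end Comap

theorem integral_abs_eq_convexSum (hμ : U.μ = convexSumMeasure S.μ T.μ t)
    (ht : t ∈ Set.Icc (0 : ℝ) 1) (f : LinfG U b) :
    ∫ z, |(f : X ⊕ Y →ₘ[U.μ] ℝ) z| ∂U.μ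
      = t * ∫ x, |(f : X ⊕ Y →ₘ[U.μ] ℝ) (Sum.inl x)| ∂S.μ
        + (1 - t) * ∫ y, |(f : X ⊕ Y →ₘ[U.μ] ℝ) (Sum.inr y)| ∂T.μ := by
  have hf : Integrable (fun z => |(f : X ⊕ Y →ₘ[U.μ] ℝ) z|) (convexSumMeasure S.μ T.μ t) :=
    hμ ▸ integrable_abs f
  simpa only [← hμ] using integral_convexSumMeasure ht hf

theorem mk_sumElim_mem (hμ : U.μ = convexSumMeasure S.μ T.μ t) (a : LinfG S b) (c : LinfG T b)
    (hm : AEStronglyMeasurable (Sum.elim ⇑(a : X →ₘ[S.μ] ℝ) ⇑(c : Y →ₘ[T.μ] ℝ)) U.μ) :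
    AEEqFun.mk _ hm ∈ LinfG U b := by
  obtain ⟨C, hC⟩ := mem_iff.1 a.2
  obtain ⟨D, hD⟩ := mem_iff.1 c.2
  refine mem_iff.2 ⟨max C D, ?_⟩
  filter_upwards [AEEqFun.coeFn_mk _ hm, ae_of_ae_inl_of_ae_inr hμ (p := fun z =>
      |Sum.elim ⇑(a : X →ₘ[S.μ] ℝ) ⇑(c : Y →ₘ[T.μ] ℝ) z| ≤ max C D ∧
        (b → ∃ k : ℤ, Sum.elim ⇑(a : X →ₘ[S.μ] ℝ) ⇑(c : Y →ₘ[T.μ] ℝ) z = k))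
    (hC.mono fun _ h => ⟨h.1.trans (le_max_left C D), h.2⟩)
    (hD.mono fun _ h => ⟨h.1.trans (le_max_right C D), h.2⟩)] with z e h
  rwa [e]

variable (U b) in
/-- The inverse of the restriction isomorphism `L^∞(X ⊔ Y) ≅ L^∞(X) ⊕ L^∞(Y)`. -/
noncomputable def sumElim (hμ : U.μ = convexSumMeasure S.μ T.μ t) :
    LinfG S b × LinfG T b →ₗ[ℤ] LinfG U b :=
  AddMonoidHom.toIntLinearMap
    { toFun p := ⟨_, mk_sumElim_mem hμ p.1 p.2
        ((AEEqFun.measurable _).sumElim (AEEqFun.measurable _)).aestronglyMeasurable⟩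
      map_zero' := by
        refine Subtype.ext (AEEqFun.ext ?_)
        refine (AEEqFun.coeFn_mk _ _).trans ((sumElim_ae_eq_sumElim hμ AEEqFun.coeFn_zero
          AEEqFun.coeFn_zero).trans ?_)
        rw [Sum.elim_zero_zero]
        exact AEEqFun.coeFn_zero.symm
      map_add' p q := by
        refine Subtype.ext (AEEqFun.ext ?_)
        refine (AEEqFun.coeFn_mk _ _).trans ((sumElim_ae_eq_sumElim hμ (AEEqFun.coeFn_add _ _)
          (AEEqFun.coeFn_add _ _)).trans ?_)
        rw [Sum.elim_add_add]
        exact ((AEEqFun.coeFn_mk _ _).add (AEEqFun.coeFn_mk _ _)).symm.trans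
          (AEEqFun.coeFn_add _ _).symm }

variable (hμ : U.μ = convexSumMeasure S.μ T.μ t)

theorem coeFn_sumElim (p : LinfG S b × LinfG T b) :
    ((sumElim U b hμ p : LinfG U b) : X ⊕ Y →ₘ[U.μ] ℝ)
      =ᵐ[U.μ] Sum.elim ⇑(p.1 : X →ₘ[S.μ] ℝ) ⇑(p.2 : Y →ₘ[T.μ] ℝ) :=
  AEEqFun.coeFn_mk _ _

theorem sumElim_rhoG (hact : ∀ g, U.act g = Sum.map (S.act g) (T.act g)) (g : Γ)
    (p : LinfG S b × LinfG T b) :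
    sumElim U b hμ (rhoG S b g p.1, rhoG T b g p.2) = rhoG U b g (sumElim U b hμ p) := by
  refine Subtype.ext (AEEqFun.ext ((coeFn_sumElim hμ _).trans ?_))
  refine (sumElim_ae_eq_sumElim hμ (AEEqFun.coeFn_compMeasurePreserving _ (S.meas g))
    (AEEqFun.coeFn_compMeasurePreserving _ (T.meas g))).trans ?_
  rw [← Sum.elim_comp_map, ← hact]
  exact ((U.meas g).quasiMeasurePreserving.ae_eq (coeFn_sumElim hμ p).symm).trans
    (AEEqFun.coeFn_compMeasurePreserving _ (U.meas g)).symm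

theorem sumElim_constLG (k : ℤ) :
    sumElim U b hμ (constLG S b k, constLG T b k) = constLG U b k := by
  refine Subtype.ext (AEEqFun.ext ((coeFn_sumElim hμ _).trans ?_))
  refine (sumElim_ae_eq_sumElim hμ (coeFn_constLG k) (coeFn_constLG k)).trans ?_
  refine Filter.EventuallyEq.trans ?_ (coeFn_constLG k).symm
  exact .of_forall (Sum.rec (fun _ => rfl) (fun _ => rfl))

theorem integral_abs_sumElim (ht : t ∈ Set.Icc (0 : ℝ) 1) (p : LinfG S b × LinfG T b) :
    ∫ z, |((sumElim U b hμ p : LinfG U b) : X ⊕ Y →ₘ[U.μ] ℝ) z| ∂U.μ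
      = t * ∫ x, |(p.1 : X →ₘ[S.μ] ℝ) x| ∂S.μ + (1 - t) * ∫ y, |(p.2 : Y →ₘ[T.μ] ℝ) y| ∂T.μ := by
  have he : (fun z => |((sumElim U b hμ p : LinfG U b) : X ⊕ Y →ₘ[U.μ] ℝ) z|) =ᵐ[U.μ]
      fun z => |Sum.elim ⇑(p.1 : X →ₘ[S.μ] ℝ) ⇑(p.2 : Y →ₘ[T.μ] ℝ) z| :=
    (coeFn_sumElim hμ p).mono fun _ h => congrArg abs h
  have hf := (integrable_abs (sumElim U b hμ p)).congr he
  rw [integral_congr_ae he]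
  rw [hμ] at hf ⊢
  exact integral_convexSumMeasure ht hf

end LinfG

theorem UnivCover.exists_comp_eq {Γ : Type} [Group Γ] {Mt M : Type} [TopologicalSpace Mt]
    [TopologicalSpace M] {π : C(Mt, M)} {actM : Γ → C(Mt, Mt)} (hU : UnivCover Γ Mt M π actM)
    {n : ℕ} {σ σ' : SSimplex n Mt} (h : π.comp σ = π.comp σ') : ∃ g, (actM g).comp σ = σ' := by
  obtain ⟨x⟩ : Nonempty (TSimplex n) := inferInstance
  obtain ⟨g, hg⟩ := hU.deck_trans (σ x) (σ' x) (DFunLike.congr_fun h x)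
  refine ⟨g, ContinuousMap.ext (congrFun (hU.covering.eq_of_comp_eq
    ((actM g).comp σ).continuous σ'.continuous ?_ x hg))⟩
  funext u
  exact (hU.deck_proj g (σ u)).trans (DFunLike.congr_fun h u)

section ParametrisedCycles

variable {Γ : Type} [Group Γ] {Mt M : Type} [TopologicalSpace Mt] [TopologicalSpace M]
  {π : C(Mt, M)} {actM : Γ → C(Mt, Mt)} {X X' Y Z : Type} [MeasurableSpace X]
  [MeasurableSpace X'] [MeasurableSpace Y] [MeasurableSpace Z] {S : StdStr Γ X} {S' : StdStr Γ X'}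
  {T : StdStr Γ Y} {U : StdStr Γ Z} {b b' : Bool} {n : ℕ}

variable (S b) in
noncomputable def constL : ℤ →ₗ[ℤ] LinfG S b :=
  LinearMap.toSpanSingleton ℤ _ (constLG S b 1)

theorem constL_apply (k : ℤ) : constL S b k = constLG S b k :=
  Subtype.ext (congrArg (k • ·) (one_smul ℤ _))

theorem iotaChain_eq_changeCoeff (c : SChains n Mt ℤ) :
    iotaChain S b c = changeCoeff (constL S b) c := by
  ext σ
  simp [iotaChain, constL_apply]

theorem iotaChain_sub (c d : SChains n Mt ℤ) :
    iotaChain S b (c - d) = iotaChain S b c - iotaChain S b d := by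
  simp only [iotaChain_eq_changeCoeff, map_sub]

theorem rhoG_constLG (g : Γ) (k : ℤ) : rhoG S b g (constLG S b k) = constLG S b k := by
  rw [LinfG.rhoG_eq_comap, LinfG.comap_constLG]

theorem rhoG_zero (g : Γ) : rhoG S b g 0 = 0 := by
  rw [LinfG.rhoG_eq_comap, map_zero]

theorem relSub_le_comap_changeCoeff (φ : LinfG S b →ₗ[ℤ] LinfG S' b')
    (hφ : ∀ g f, φ (rhoG S b g f) = rhoG S' b' g (φ f)) :
    relSub n actM S b ≤ (relSub n actM S' b').comap (changeCoeff φ) := by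
  rw [relSub, Submodule.span_le]
  rintro _ ⟨g, σ, f, rfl⟩
  exact Submodule.subset_span
    ⟨g, σ, φ f, by rw [map_sub, changeCoeff_single, changeCoeff_single, hφ]⟩

theorem relSub_sup_bdriesSub_le_comap_changeCoeff (φ : LinfG S b →ₗ[ℤ] LinfG S' b')
    (hφ : ∀ g f, φ (rhoG S b g f) = rhoG S' b' g (φ f)) :
    relSub n actM S b ⊔ bdriesSub n Mt (LinfG S b)
      ≤ (relSub n actM S' b' ⊔ bdriesSub n Mt (LinfG S' b')).comap (changeCoeff φ) :=
  sup_le ((relSub_le_comap_changeCoeff φ hφ).trans (Submodule.comap_mono le_sup_left))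
    ((bdriesSub_le_comap_changeCoeff φ).trans (Submodule.comap_mono le_sup_right))

theorem iotaChain_mem_relSub (hU : UnivCover Γ Mt M π actM) {w : SChains n Mt ℤ}
    (hw : pushf π w = 0) : iotaChain S b w ∈ relSub n actM S b := by
  rw [iotaChain_eq_changeCoeff]
  refine (Submodule.span_le (p := (relSub n actM S b).comap (changeCoeff (constL S b)))).2 ?_
    (mem_span_single_sub_single_of_mapDomain_eq_zero (R := ℤ) hw)
  rintro _ ⟨σ, σ', k, h, rfl⟩
  obtain ⟨g, rfl⟩ := hU.exists_comp_eq h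
  have hgen : single ((actM g).comp σ) (constLG S b k) - single σ (constLG S b k)
      ∈ relSub n actM S b :=
    Submodule.subset_span ⟨g, σ, constLG S b k, by rw [rhoG_constLG]⟩
  rw [SetLike.mem_coe, Submodule.mem_comap, map_sub, changeCoeff_single, changeCoeff_single,
    constL_apply, ← neg_sub]
  exact neg_mem hgen

theorem isPFC_iotaChain (hU : UnivCover Γ Mt M π actM) {z : SChains n M ℤ}
    (hz : bdryFrom n M ℤ z = 0) {zt : SChains n Mt ℤ} (hzt : pushf π zt = z) :
    IsPFC n Γ Mt M π actM X S b z (iotaChain S b zt) := by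
  refine ⟨?_, zt, hzt, by simp⟩
  rw [iotaChain_eq_changeCoeff, changeCoeff_bdryFrom, ← iotaChain_eq_changeCoeff]
  exact iotaChain_mem_relSub hU (by rw [pushf_bdryFrom, hzt, hz])

theorem IsPFC.map {z : SChains n M ℤ} {c : SChains n Mt (LinfG S b)}
    (hc : IsPFC n Γ Mt M π actM X S b z c) (φ : LinfG S b →ₗ[ℤ] LinfG S' b')
    (hφ : ∀ g f, φ (rhoG S b g f) = rhoG S' b' g (φ f))
    (hconst : ∀ k, φ (constLG S b k) = constLG S' b' k) :
    IsPFC n Γ Mt M π actM X' S' b' z (changeCoeff φ c) := by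
  obtain ⟨hcyc, zt, hzt, hhom⟩ := hc
  refine ⟨?_, zt, hzt, ?_⟩
  · rw [changeCoeff_bdryFrom]
    exact relSub_le_comap_changeCoeff φ hφ hcyc
  · have hiota : changeCoeff φ (iotaChain S b zt) = iotaChain S' b' zt := by
      ext σ
      simp [iotaChain, hconst]
    rw [← hiota, ← map_sub]
    exact relSub_sup_bdriesSub_le_comap_changeCoeff φ hφ hhom

theorem IsPFC.combine (hU : UnivCover Γ Mt M π actM) {z : SChains n M ℤ}
    {cX : SChains n Mt (LinfG S b)} {cY : SChains n Mt (LinfG T b)}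
    (hcX : IsPFC n Γ Mt M π actM X S b z cX) (hcY : IsPFC n Γ Mt M π actM Y T b z cY)
    (φ : LinfG S b × LinfG T b →ₗ[ℤ] LinfG U b')
    (hφ : ∀ g p, φ (rhoG S b g p.1, rhoG T b g p.2) = rhoG U b' g (φ p))
    (hconst : ∀ k, φ (constLG S b k, constLG T b k) = constLG U b' k) :
    IsPFC n Γ Mt M π actM Z U b' z
      (changeCoeff (φ ∘ₗ .inl ℤ _ _) cX + changeCoeff (φ ∘ₗ .inr ℤ _ _) cY) := by
  have hl : ∀ g f, (φ ∘ₗ .inl ℤ _ _) (rhoG S b g f) = rhoG U b' g ((φ ∘ₗ .inl ℤ _ _) f) :=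
    fun g f => by simpa [rhoG_zero] using hφ g (f, 0)
  have hr : ∀ g f, (φ ∘ₗ .inr ℤ _ _) (rhoG T b g f) = rhoG U b' g ((φ ∘ₗ .inr ℤ _ _) f) :=
    fun g f => by simpa [rhoG_zero] using hφ g (0, f)
  obtain ⟨hcycX, ztX, hztX, hhomX⟩ := hcX
  obtain ⟨hcycY, ztY, hztY, hhomY⟩ := hcY
  refine ⟨?_, ztX, hztX, ?_⟩
  · rw [map_add, changeCoeff_bdryFrom, changeCoeff_bdryFrom]
    exact add_mem (relSub_le_comap_changeCoeff _ hl hcycX)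
      (relSub_le_comap_changeCoeff _ hr hcycY)
  -- the lifts of `z` underlying `cX` and `cY` differ by deck transformations
  have hlifts : iotaChain T b (ztY - ztX) ∈ relSub n actM T b :=
    iotaChain_mem_relSub hU (by rw [pushf, mapDomain_sub, ← pushf, ← pushf, hztX, hztY, sub_self])
  have hiota : iotaChain U b' ztX
      = changeCoeff (φ ∘ₗ .inl ℤ _ _) (iotaChain S b ztX)
        + changeCoeff (φ ∘ₗ .inr ℤ _ _) (iotaChain T b ztX) := by
    ext σ
    simp [iotaChain, ← hconst, ← map_add]
  have hsplit : changeCoeff (φ ∘ₗ .inl ℤ _ _) cX + changeCoeff (φ ∘ₗ .inr ℤ _ _) cY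
        - iotaChain U b' ztX
      = changeCoeff (φ ∘ₗ .inl ℤ _ _) (cX - iotaChain S b ztX)
        + changeCoeff (φ ∘ₗ .inr ℤ _ _)
          ((cY - iotaChain T b ztY) + iotaChain T b (ztY - ztX)) := by
    rw [hiota, iotaChain_sub]
    simp only [map_add, map_sub]
    abel
  rw [hsplit]
  exact add_mem (relSub_sup_bdriesSub_le_comap_changeCoeff _ hl hhomX)
    (relSub_sup_bdriesSub_le_comap_changeCoeff _ hr (add_mem hhomY (Submodule.mem_sup_left hlifts)))

end ParametrisedCycles

section Norms

variable {Γ : Type} [Group Γ] {Mt : Type} [TopologicalSpace Mt] {X X' Y : Type}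
  [MeasurableSpace X] [MeasurableSpace X'] [MeasurableSpace Y] {S : StdStr Γ X}
  {S' : StdStr Γ X'} {T : StdStr Γ Y} {U : StdStr Γ (X ⊕ Y)} {b : Bool} {n : ℕ} {t : ℝ}

theorem normP_nonneg (c : SChains n Mt (LinfG S b)) : 0 ≤ normP S b c :=
  Finset.sum_nonneg fun _ _ => integral_nonneg fun _ => abs_nonneg _

theorem normP_eq_sum {c : SChains n Mt (LinfG S b)} {s : Finset (SSimplex n Mt)}
    (hs : c.support ⊆ s) :
    normP S b c = ∑ σ ∈ s, ∫ x, |((c σ : LinfG S b) : X →ₘ[S.μ] ℝ) x| ∂S.μ :=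
  sum_of_support_subset c hs _ fun _ _ => LinfG.integral_abs_zero

theorem normP_changeCoeff_comap {φ : X → X'} (hφ : Measure.QuasiMeasurePreserving φ S.μ S'.μ)
    (c : SChains n Mt (LinfG S' b)) :
    normP S b (changeCoeff (LinfG.comap S S' b φ hφ) c)
      = c.sum fun _ f => ∫ x, |(f : X' →ₘ[S'.μ] ℝ) (φ x)| ∂S.μ := by
  rw [normP, changeCoeff, mapRange.linearMap_apply,
    sum_mapRange_index fun _ => LinfG.integral_abs_zero]
  simp only [LinfG.integral_abs_comap]

theorem normP_eq_convexSum (hμ : U.μ = convexSumMeasure S.μ T.μ t) (ht : t ∈ Set.Icc (0 : ℝ) 1)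
    (c : SChains n Mt (LinfG U b)) :
    normP U b c = t * (c.sum fun _ f => ∫ x, |(f : X ⊕ Y →ₘ[U.μ] ℝ) (Sum.inl x)| ∂S.μ)
      + (1 - t) * (c.sum fun _ f => ∫ y, |(f : X ⊕ Y →ₘ[U.μ] ℝ) (Sum.inr y)| ∂T.μ) := by
  simp only [normP, Finsupp.sum, Finset.mul_sum, ← Finset.sum_add_distrib,
    LinfG.integral_abs_eq_convexSum hμ ht]

theorem normP_combine_sumElim (hμ : U.μ = convexSumMeasure S.μ T.μ t)
    (ht : t ∈ Set.Icc (0 : ℝ) 1) (cX : SChains n Mt (LinfG S b)) (cY : SChains n Mt (LinfG T b)) :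
    normP U b (changeCoeff (LinfG.sumElim U b hμ ∘ₗ .inl ℤ _ _) cX
        + changeCoeff (LinfG.sumElim U b hμ ∘ₗ .inr ℤ _ _) cY)
      = t * normP S b cX + (1 - t) * normP T b cY := by
  classical
  have hsupp : (changeCoeff (LinfG.sumElim U b hμ ∘ₗ .inl ℤ _ _) cX
      + changeCoeff (LinfG.sumElim U b hμ ∘ₗ .inr ℤ _ _) cY).support ⊆ cX.support ∪ cY.support :=
    support_add.trans (Finset.union_subset_union (support_mapRange (hf := map_zero _))
      (support_mapRange (hf := map_zero _)))
  rw [normP_eq_sum hsupp, normP_eq_sum Finset.subset_union_left,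
    normP_eq_sum Finset.subset_union_right, Finset.mul_sum, Finset.mul_sum,
    ← Finset.sum_add_distrib]
  refine Finset.sum_congr rfl fun σ _ => ?_
  rw [← LinfG.integral_abs_sumElim hμ ht (cX σ, cY σ)]
  simp [← map_add]

end Norms

section ParametrisedVolume

variable {Γ : Type} [Group Γ] {Mt M : Type} [TopologicalSpace Mt] [TopologicalSpace M]
  {π : C(Mt, M)} {actM : Γ → C(Mt, Mt)} {X X' Y : Type} [MeasurableSpace X]
  [MeasurableSpace X'] [MeasurableSpace Y] {b : Bool} {n : ℕ} {z : SChains n M ℤ}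

variable (π actM) in
def pfcNorms (S : StdStr Γ X) (b : Bool) (z : SChains n M ℤ) : Set ℝ :=
  {r | ∃ c, IsPFC n Γ Mt M π actM X S b z c ∧ r = normP S b c}

theorem pSV_eq_sInf (S : StdStr Γ X) :
    pSV b n Γ Mt M π actM X S z = sInf (pfcNorms π actM S b z) :=
  rfl

theorem pfcNorms_eq_empty (S : StdStr Γ X) (h : ¬∃ zt, pushf π zt = z) :
    pfcNorms π actM S b z = ∅ :=
  Set.eq_empty_of_forall_notMem fun _ ⟨_, ⟨_, zt, hzt, _⟩, _⟩ => h ⟨zt, hzt⟩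

theorem bddBelow_pfcNorms (S : StdStr Γ X) : BddBelow (pfcNorms π actM S b z) :=
  ⟨0, by rintro _ ⟨c, -, rfl⟩; exact normP_nonneg c⟩

theorem pfcNorms_nonempty (hU : UnivCover Γ Mt M π actM) (hz : bdryFrom n M ℤ z = 0)
    {zt : SChains n Mt ℤ} (hzt : pushf π zt = z) (S : StdStr Γ X) :
    (pfcNorms π actM S b z).Nonempty :=
  ⟨_, _, isPFC_iotaChain hU hz hzt, rfl⟩

theorem IsPFC.normP_comap_mem_pfcNorms {S : StdStr Γ X} {S' : StdStr Γ X'}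
    {c : SChains n Mt (LinfG S' b)} (hc : IsPFC n Γ Mt M π actM X' S' b z c) {φ : X → X'}
    (hφ : Measure.QuasiMeasurePreserving φ S.μ S'.μ)
    (hequiv : ∀ g x, φ (S.act g x) = S'.act g (φ x)) :
    (c.sum fun _ f => ∫ x, |(f : X' →ₘ[S'.μ] ℝ) (φ x)| ∂S.μ) ∈ pfcNorms π actM S b z :=
  ⟨_, hc.map _ (LinfG.comap_rhoG hequiv) LinfG.comap_constLG, (normP_changeCoeff_comap hφ c).symm⟩

theorem Set.Nonempty.exists_mem_mul_eq_mul {A : Set ℝ} (hA : A.Nonempty) {s N : ℝ} (hs : 0 ≤ s)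
    (hN : 0 < s → N ∈ A) : ∃ r ∈ A, s * r = s * N := by
  rcases hs.eq_or_lt with h | h
  · exact ⟨_, hA.some_mem, by simp [← h]⟩
  · exact ⟨N, hN h, rfl⟩

section SumDecomposition

open scoped Pointwise

variable {S : StdStr Γ X} {T : StdStr Γ Y} {U : StdStr Γ (X ⊕ Y)} {t : ℝ}

theorem exists_mem_convexComb_le_of_mem_pfcNorms (ht : t ∈ Set.Icc (0 : ℝ) 1)
    (hμ : U.μ = convexSumMeasure S.μ T.μ t) (hact : ∀ g, U.act g = Sum.map (S.act g) (T.act g))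
    (hneS : (pfcNorms π actM S b z).Nonempty)
    (hneT : (pfcNorms π actM T b z).Nonempty) {r : ℝ} (hr : r ∈ pfcNorms π actM U b z) :
    ∃ y ∈ t • pfcNorms π actM S b z + (1 - t) • pfcNorms π actM T b z, y ≤ r := by
  obtain ⟨c, hc, rfl⟩ := hr
  obtain ⟨rX, hrX, hX⟩ := hneS.exists_mem_mul_eq_mul ht.1 fun h => hc.normP_comap_mem_pfcNorms
    (hμ ▸ quasiMeasurePreserving_inl_convexSumMeasure h) fun g x => by rw [hact]; rfl
  obtain ⟨rY, hrY, hY⟩ := hneT.exists_mem_mul_eq_mul (sub_nonneg.2 ht.2) fun h =>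
    hc.normP_comap_mem_pfcNorms (hμ ▸ quasiMeasurePreserving_inr_convexSumMeasure (sub_pos.1 h))
      fun g x => by rw [hact]; rfl
  refine ⟨t • rX + (1 - t) • rY, Set.add_mem_add (Set.smul_mem_smul_set hrX)
    (Set.smul_mem_smul_set hrY), ?_⟩
  rw [normP_eq_convexSum hμ ht, smul_eq_mul, smul_eq_mul, hX, hY]

theorem exists_mem_pfcNorms_le_of_mem_convexComb (hU : UnivCover Γ Mt M π actM)
    (ht : t ∈ Set.Icc (0 : ℝ) 1) (hμ : U.μ = convexSumMeasure S.μ T.μ t)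
    (hact : ∀ g, U.act g = Sum.map (S.act g) (T.act g)) {y : ℝ}
    (hy : y ∈ t • pfcNorms π actM S b z + (1 - t) • pfcNorms π actM T b z) :
    ∃ r ∈ pfcNorms π actM U b z, r ≤ y := by
  obtain ⟨_, ⟨_, ⟨cX, hcX, rfl⟩, rfl⟩, _, ⟨_, ⟨cY, hcY, rfl⟩, rfl⟩, rfl⟩ := hy
  exact ⟨_, ⟨_, hcX.combine hU hcY (LinfG.sumElim U b hμ) (LinfG.sumElim_rhoG hμ hact)
    (LinfG.sumElim_constLG hμ), rfl⟩, (normP_combine_sumElim hμ ht cX cY).le⟩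

end SumDecomposition

theorem pSV_convexSum (hU : UnivCover Γ Mt M π actM) (hz : bdryFrom n M ℤ z = 0)
    (S : StdStr Γ X) (T : StdStr Γ Y) (U : StdStr Γ (X ⊕ Y)) {t : ℝ}
    (ht : t ∈ Set.Icc (0 : ℝ) 1) (hμ : U.μ = convexSumMeasure S.μ T.μ t)
    (hact : ∀ g, U.act g = Sum.map (S.act g) (T.act g)) :
    pSV b n Γ Mt M π actM (X ⊕ Y) U z
      = t * pSV b n Γ Mt M π actM X S z + (1 - t) * pSV b n Γ Mt M π actM Y T z := by
  simp only [pSV_eq_sInf]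
  by_cases hlift : ∃ zt, pushf π zt = z
  swap
  · simp [pfcNorms_eq_empty _ hlift]
  obtain ⟨zt, hzt⟩ := hlift
  have hne {W : Type} [MeasurableSpace W] (V : StdStr Γ W) : (pfcNorms π actM V b z).Nonempty :=
    pfcNorms_nonempty hU hz hzt V
  have h1t : 0 ≤ 1 - t := sub_nonneg.2 ht.2
  rw [← smul_eq_mul, ← smul_eq_mul (a := 1 - t), ← Real.sInf_smul_of_nonneg ht.1,
    ← Real.sInf_smul_of_nonneg h1t, ← csInf_add ((hne S).smul_set)
      ((bddBelow_pfcNorms S).smul_of_nonneg ht.1) ((hne T).smul_set)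
      ((bddBelow_pfcNorms T).smul_of_nonneg h1t)]
  exact csInf_eq_csInf_of_forall_exists_le
    (fun _ => exists_mem_convexComb_le_of_mem_pfcNorms ht hμ hact (hne S) (hne T))
    (fun _ => exists_mem_pfcNorms_le_of_mem_convexComb hU ht hμ hact)

end ParametrisedVolume

open scoped ENNReal in
theorem parametrised_simplicial_volume_convex_combination_general
    (n : ℕ) (Γ : Type) [Group Γ]
    (M : Type) [TopologicalSpace M]
    (Mt : Type) [TopologicalSpace Mt] (π : C(Mt, M)) (actM : Γ → C(Mt, Mt))
    (hU : UnivCover Γ Mt M π actM)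
    (z : SChains n M ℤ) (hz : IsFundCycle n M z)
    (X : Type) [MeasurableSpace X] (S : StdStr Γ X)
    (Y : Type) [MeasurableSpace Y] (T : StdStr Γ Y)
    (t : ℝ) (ht : t ∈ Set.Icc (0 : ℝ) 1) :
    ∃ U : StdStr Γ (X ⊕ Y),
      U.μ = ENNReal.ofReal t • S.μ.map Sum.inl + ENNReal.ofReal (1 - t) • T.μ.map Sum.inr ∧
      U.act = (fun g s => Sum.map (S.act g) (T.act g) s) ∧
      pSV true n Γ Mt M π actM (X ⊕ Y) U z =
        t * pSV true n Γ Mt M π actM X S z + (1 - t) * pSV true n Γ Mt M π actM Y T z :=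
  ⟨StdStr.convexSum S T t ht, rfl, rfl,
    pSV_convexSum hU (LinearMap.mem_ker.1 hz.1) S T _ ht rfl fun _ => rfl⟩

open scoped ENNReal in
/-- Let `M` be an oriented closed connected manifold with fundamental
group `Γ`, `(X,μ)`, `(Y,ν)` standard `Γ`-spaces and `t ∈ [0,1]`.  Let `Z = X ⊔ Y` with
the probability measure `t·μ ⊔ (1−t)·ν` and the obvious `Γ`-action.  Then
`⎸M⎹^Z = t·⎸M⎹^X + (1−t)·⎸M⎹^Y`. -/
theorem parametrised_simplicial_volume_convex_combination
    (n : ℕ) (Γ : Type) [Group Γ] [Countable Γ]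
    (M : Type) [TopologicalSpace M] [CompactSpace M] [ConnectedSpace M] [T2Space M]
    [ChartedSpace (EuclideanSpace ℝ (Fin n)) M]
    (Mt : Type) [TopologicalSpace Mt] (π : C(Mt, M)) (actM : Γ → C(Mt, Mt))
    (hU : UnivCover Γ Mt M π actM)
    (z : SChains n M ℤ) (hz : IsFundCycle n M z)
    (X : Type) [MeasurableSpace X] (S : StdStr Γ X)
    (Y : Type) [MeasurableSpace Y] (T : StdStr Γ Y)
    (t : ℝ) (ht : t ∈ Set.Icc (0 : ℝ) 1) :
    ∃ U : StdStr Γ (X ⊕ Y),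
      U.μ = ENNReal.ofReal t • S.μ.map Sum.inl + ENNReal.ofReal (1 - t) • T.μ.map Sum.inr ∧
      U.act = (fun g s => Sum.map (S.act g) (T.act g) s) ∧
      pSV true n Γ Mt M π actM (X ⊕ Y) U z =
        t * pSV true n Γ Mt M π actM X S z + (1 - t) * pSV true n Γ Mt M π actM Y T z :=
  parametrised_simplicial_volume_convex_combination_general n Γ M Mt π actM hU z hz X S Y T t ht
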